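/- arXiv:0806.4491 — 4 statements merged into one kernel-verified Lean document; each statement's English description precedes it below -/
import Mathlib

section
/- Theorem 3.1 (Convergence ⟹ Distant Stability): Given a well posed nonlinear semigroup E on a real normed vector space X and a numerical method C that is convergent to it, the numerical method is distantly stable. -/
open Set

variable (X : Type*) [NormedAddCommGroup X] [NormedSpace ℝ X]

/-- The set `Z = ⋃_{t ≥ 0} {t} × X_t ⊆ [0,∞) × X`. -/
def ZSet (Xt : ℝ → Set X) : Set (ℝ × X) :=
  {p : ℝ × X | 0 ≤ p.1 ∧ p.2 ∈ Xt p.1}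

/-- A nonlinear semigroup on `X`: a family of subsets `Xt t ⊆ X` with
`X_{t+s} ⊆ X_t`, together with maps `E t : X → X` with `E 0 = id` on `X_0`,
`E t` mapping `X_{t+s}` into `X_s`, and the semigroup law. -/
structure IsNonlinearSemigroup (Xt : ℝ → Set X) (E : ℝ → X → X) : Prop where
  nested : ∀ t s : ℝ, 0 ≤ t → 0 ≤ s → Xt (t + s) ⊆ Xt t
  id_zero : ∀ u ∈ Xt 0, E 0 u = u
  maps : ∀ t s : ℝ, 0 ≤ t → 0 ≤ s → ∀ u ∈ Xt (t + s), E t u ∈ Xt s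
  comp : ∀ t s : ℝ, 0 ≤ t → 0 ≤ s → ∀ u ∈ Xt (t + s), E (t + s) u = E s (E t u)

/-- Well posedness: `(t,u) ↦ E t u` is continuous on `Z`. -/
def WellPosed (Xt : ℝ → Set X) (E : ℝ → X → X) : Prop :=
  ContinuousOn (fun p : ℝ × X => E p.1 p.2) (ZSet X Xt)

/-- A numerical method: a continuous map `C : [0,∞) × X → X` with `C 0 = id`. -/
structure IsNumericalMethod (C : ℝ → X → X) : Prop where
  cont : ContinuousOn (fun p : ℝ × X => C p.1 p.2) {p : ℝ × X | 0 ≤ p.1}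
  id_zero : ∀ u : X, C 0 u = u

/-- A regular subset `Z' ⊆ Z`: closed, and invariant (in the appropriate sense)
under the semigroup and the numerical method.  Here `X'_t = {u | (t,u) ∈ Z'}`. -/
def RegularSet (Xt : ℝ → Set X) (E C : ℝ → X → X) (Z' : Set (ℝ × X)) : Prop :=
  Z' ⊆ ZSet X Xt ∧ IsClosed Z' ∧
  (∀ t s : ℝ, 0 ≤ t → 0 ≤ s → ∀ u : X, (t + s, u) ∈ Z' → (s, E t u) ∈ Z') ∧
  (∀ t Δt : ℝ, 0 ≤ t → 0 ≤ Δt → ∀ u : X, (t + Δt, u) ∈ Z' → (t, C Δt u) ∈ Z')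

/-- Local stability (Definition 2.3). -/
def LocallyStable (Xt : ℝ → Set X) (E C : ℝ → X → X) : Prop :=
  ∀ Z' : Set (ℝ × X), RegularSet X Xt E C Z' →
  ∀ T : ℝ, 0 < T → ∀ K : Set X, IsCompact K →
  ∃ L' ρ' : ℝ, 0 < L' ∧ 0 < ρ' ∧
    ∀ (Δt : ℝ) (n : ℕ) (u v : X), 0 < Δt → (n : ℝ) * Δt ≤ T →
      u ∈ K → v ∈ K → ((n : ℝ) * Δt, u) ∈ Z' → ((n : ℝ) * Δt, v) ∈ Z' →
      ‖v - u‖ ≤ ρ' → ‖(C Δt)^[n] v - (C Δt)^[n] u‖ ≤ L' * ‖v - u‖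

/-- Distant stability (Definition 2.4). -/
def DistantlyStable (Xt : ℝ → Set X) (E C : ℝ → X → X) : Prop :=
  ∀ Z' : Set (ℝ × X), RegularSet X Xt E C Z' →
  ∀ T : ℝ, 0 < T → ∀ K : Set X, IsCompact K → ∀ ρ : ℝ, 0 < ρ →
  ∃ L'' : ℝ, 0 < L'' ∧
    ∀ (Δt : ℝ) (n : ℕ) (u v : X), 0 < Δt → (n : ℝ) * Δt ≤ T →
      u ∈ K → v ∈ K → ((n : ℝ) * Δt, u) ∈ Z' → ((n : ℝ) * Δt, v) ∈ Z' →
      ρ ≤ ‖v - u‖ → ‖(C Δt)^[n] v - (C Δt)^[n] u‖ ≤ L'' * ‖v - u‖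

/-- Stability (Definition 2.5). -/
def Stable (Xt : ℝ → Set X) (E C : ℝ → X → X) : Prop :=
  ∀ Z' : Set (ℝ × X), RegularSet X Xt E C Z' →
  ∀ T : ℝ, 0 < T → ∀ K : Set X, IsCompact K →
  ∃ L : ℝ, 0 < L ∧
    ∀ (Δt : ℝ) (n : ℕ) (u v : X), 0 < Δt → (n : ℝ) * Δt ≤ T →
      u ∈ K → v ∈ K → ((n : ℝ) * Δt, u) ∈ Z' → ((n : ℝ) * Δt, v) ∈ Z' →
      ‖(C Δt)^[n] v - (C Δt)^[n] u‖ ≤ L * ‖v - u‖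

/-- Convergence of the numerical method to the semigroup (Definition 3.1). -/
def Convergent (Xt : ℝ → Set X) (E C : ℝ → X → X) : Prop :=
  ∀ Z' : Set (ℝ × X), RegularSet X Xt E C Z' →
  ∀ T : ℝ, 0 < T → ∀ K : Set X, IsCompact K → ∀ ε : ℝ, 0 < ε →
  ∃ θ : ℝ, 0 < θ ∧
    ∀ (t Δt : ℝ) (n : ℕ) (u : X), t ∈ Icc (0 : ℝ) T → 0 < Δt →
      u ∈ K → (t, u) ∈ Z' → ((n : ℝ) * Δt, u) ∈ Z' →
      Δt ≤ θ → |t - (n : ℝ) * Δt| ≤ θ →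
      ‖E t u - (C Δt)^[n] u‖ ≤ ε

/-- Consistency of the numerical method with the semigroup (Definition 3.2). -/
def Consistent (Xt : ℝ → Set X) (E C : ℝ → X → X) : Prop :=
  ∀ Z' : Set (ℝ × X), RegularSet X Xt E C Z' →
  ∀ T : ℝ, 0 < T → ∀ K : Set X, IsCompact K → ∀ ε : ℝ, 0 < ε →
  ∃ δ : ℝ, 0 < δ ∧
    ∀ (t Δt : ℝ) (u : X), t ∈ Icc (0 : ℝ) T → 0 < Δt → Δt ≤ δ →
      u ∈ K → (t + Δt, u) ∈ Z' →
      ‖C Δt (E t u) - E Δt (E t u)‖ ≤ ε * Δt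

/-- Condition (4.3): the optimal distant-stability constants remain bounded as
`ρ ↓ 0`, i.e. one constant works simultaneously for all `ρ > 0`. -/
def Condition43 (Xt : ℝ → Set X) (E C : ℝ → X → X) : Prop :=
  ∀ Z' : Set (ℝ × X), RegularSet X Xt E C Z' →
  ∀ T : ℝ, 0 < T → ∀ K : Set X, IsCompact K →
  ∃ M : ℝ, 0 < M ∧
    ∀ ρ : ℝ, 0 < ρ →
    ∀ (Δt : ℝ) (n : ℕ) (u v : X), 0 < Δt → (n : ℝ) * Δt ≤ T →
      u ∈ K → v ∈ K → ((n : ℝ) * Δt, u) ∈ Z' → ((n : ℝ) * Δt, v) ∈ Z' →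
      ρ ≤ ‖v - u‖ → ‖(C Δt)^[n] v - (C Δt)^[n] u‖ ≤ M * ‖v - u‖

/-- Theorem 3.1 (Convergence ⟹ Distant Stability). -/
theorem convergent_implies_distantly_stable
    (Xt : ℝ → Set X) (E C : ℝ → X → X)
    (hE : IsNonlinearSemigroup X Xt E) (hWP : WellPosed X Xt E)
    (hC : IsNumericalMethod X C) (hconv : Convergent X Xt E C) :
    DistantlyStable X Xt E C := by
  intro Z' hZ' T hT K hK ρ hρ
  obtain ⟨hZsub, hZclosed, hZE, hZC⟩ := hZ'
  -- convergence with ε = 1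
  obtain ⟨θ, hθ, hconv1⟩ := hconv Z' ⟨hZsub, hZclosed, hZE, hZC⟩ T hT K hK 1 one_pos
  -- the compact set S = Z' ∩ ([0,T] × K) and a bound on its image under E
  set S : Set (ℝ × X) := Z' ∩ (Icc (0:ℝ) T ×ˢ K) with hS
  have hScomp : IsCompact S := (isCompact_Icc.prod hK).inter_left hZclosed
  have hEcont : ContinuousOn (fun p : ℝ × X => E p.1 p.2) S :=
    hWP.mono (fun p hp => hZsub hp.1)
  obtain ⟨B, hB⟩ := isBounded_iff_forall_norm_le.mp
    (hScomp.image_of_continuousOn hEcont).isBounded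
  have hB' : ∀ p ∈ S, ‖E p.1 p.2‖ ≤ max B 0 := fun p hp =>
    le_max_of_le_left (hB _ ⟨p, hp, rfl⟩)
  set B₁ : ℝ := max B 0 with hB₁
  have hB₁0 : 0 ≤ B₁ := le_max_right _ _
  -- iterated images under C with step in [θ, T]
  set F : Set X → Set X := fun s => (fun p : ℝ × X => C p.1 p.2) '' (Icc θ T ×ˢ s)
    with hF
  have hFcomp : ∀ s : Set X, IsCompact s → IsCompact (F s) := by
    intro s hs
    exact (isCompact_Icc.prod hs).image_of_continuousOn
      (hC.cont.mono (fun p hp => le_trans hθ.le hp.1.1))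
  have hKScomp : ∀ k : ℕ, IsCompact (F^[k] K) := by
    intro k
    induction k with
    | zero => simpa using hK
    | succ k ih => rw [Function.iterate_succ_apply']; exact hFcomp _ ih
  have hKSmem : ∀ (Δt : ℝ), Δt ∈ Icc θ T → ∀ u ∈ K, ∀ k : ℕ,
      (C Δt)^[k] u ∈ F^[k] K := by
    intro Δt hΔt u hu k
    induction k with
    | zero => simpa using hu
    | succ k ih =>
      rw [Function.iterate_succ_apply', Function.iterate_succ_apply']
      exact ⟨(Δt, (C Δt)^[k] u), ⟨hΔt, ih⟩, rfl⟩
  set N : ℕ := Nat.floor (T / θ) + 1 with hNdef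
  have hUcomp : IsCompact (⋃ k ∈ Finset.range (N + 1), F^[k] K) :=
    (Finset.range (N + 1)).isCompact_biUnion (fun k _ => hKScomp k)
  obtain ⟨B₂', hB₂'⟩ := isBounded_iff_forall_norm_le.mp hUcomp.isBounded
  set B₂ : ℝ := max B₂' 0 with hB₂def
  have hB₂0 : 0 ≤ B₂ := le_max_right _ _
  have hB₂ : ∀ k ≤ N, ∀ x ∈ F^[k] K, ‖x‖ ≤ B₂ := by
    intro k hk x hx
    refine le_max_of_le_left (hB₂' x ?_)
    exact Set.mem_biUnion (Finset.mem_range.mpr (Nat.lt_succ_of_le hk)) hx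
  -- the stability constant
  refine ⟨max 1 ((2 * B₁ + 2 + 2 * B₂) / ρ), lt_of_lt_of_le one_pos (le_max_left _ _), ?_⟩
  intro Δt n u v hΔt hnT hu hv huZ hvZ hρuv
  have hρuv' : (0:ℝ) < ‖v - u‖ := lt_of_lt_of_le hρ hρuv
  have hLρ : 2 * B₁ + 2 + 2 * B₂ ≤ max 1 ((2 * B₁ + 2 + 2 * B₂) / ρ) * ‖v - u‖ := by
    calc 2 * B₁ + 2 + 2 * B₂ = ((2 * B₁ + 2 + 2 * B₂) / ρ) * ρ := by
          field_simp
      _ ≤ max 1 ((2 * B₁ + 2 + 2 * B₂) / ρ) * ‖v - u‖ := by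
          apply mul_le_mul (le_max_right _ _) hρuv hρ.le
          exact le_trans (by positivity) (le_max_left _ _)
  rcases Nat.eq_zero_or_pos n with hn | hn
  · subst hn
    simpa using le_mul_of_one_le_left (norm_nonneg _) (le_max_left _ _)
  have hnΔt0 : 0 ≤ (n : ℝ) * Δt := by positivity
  by_cases hcase : Δt ≤ θ
  · -- small step: use convergence at t = nΔt
    have hmem : ((n : ℝ) * Δt) ∈ Icc (0:ℝ) T := ⟨hnΔt0, hnT⟩
    have h1 : ‖E ((n : ℝ) * Δt) u - (C Δt)^[n] u‖ ≤ 1 :=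
      hconv1 ((n : ℝ) * Δt) Δt n u hmem hΔt hu huZ huZ hcase (by simp [hθ.le])
    have h2 : ‖E ((n : ℝ) * Δt) v - (C Δt)^[n] v‖ ≤ 1 :=
      hconv1 ((n : ℝ) * Δt) Δt n v hmem hΔt hv hvZ hvZ hcase (by simp [hθ.le])
    have h3 : ‖E ((n : ℝ) * Δt) u‖ ≤ B₁ :=
      hB' ((n : ℝ) * Δt, u) ⟨huZ, hmem, hu⟩
    have h4 : ‖E ((n : ℝ) * Δt) v‖ ≤ B₁ :=
      hB' ((n : ℝ) * Δt, v) ⟨hvZ, hmem, hv⟩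
    have key : (C Δt)^[n] v - (C Δt)^[n] u =
        ((C Δt)^[n] v - E ((n : ℝ) * Δt) v) +
        ((E ((n : ℝ) * Δt) v - E ((n : ℝ) * Δt) u) +
          (E ((n : ℝ) * Δt) u - (C Δt)^[n] u)) := by abel
    calc ‖(C Δt)^[n] v - (C Δt)^[n] u‖
        ≤ ‖(C Δt)^[n] v - E ((n : ℝ) * Δt) v‖ +
            (‖E ((n : ℝ) * Δt) v - E ((n : ℝ) * Δt) u‖ +
              ‖E ((n : ℝ) * Δt) u - (C Δt)^[n] u‖) := by
          rw [key]; exact le_trans (norm_add_le _ _)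
            (by gcongr; exact norm_add_le _ _)
      _ ≤ 1 + ((‖E ((n : ℝ) * Δt) v‖ + ‖E ((n : ℝ) * Δt) u‖) + 1) := by
          gcongr
          · rw [norm_sub_rev]; exact h2
          · exact norm_sub_le _ _
      _ ≤ 1 + ((B₁ + B₁) + 1) := by gcongr
      _ ≤ 2 * B₁ + 2 + 2 * B₂ := by linarith
      _ ≤ _ := hLρ
  · -- large step: Δt ∈ (θ, T], so n ≤ N and everything stays in a compact set
    push_neg at hcase
    have hΔtT : Δt ≤ T := by
      calc Δt = 1 * Δt := (one_mul _).symm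
        _ ≤ (n : ℝ) * Δt := by
            apply mul_le_mul_of_nonneg_right _ hΔt.le
            exact_mod_cast hn
        _ ≤ T := hnT
    have hΔtmem : Δt ∈ Icc θ T := ⟨hcase.le, hΔtT⟩
    have hnN : n ≤ N := by
      have h1 : (n : ℝ) * θ ≤ T := by
        calc (n : ℝ) * θ ≤ (n : ℝ) * Δt := by
              apply mul_le_mul_of_nonneg_left hcase.le (by positivity)
          _ ≤ T := hnT
      have h2 : (n : ℝ) ≤ T / θ := (le_div_iff₀ hθ).mpr h1
      exact le_trans (Nat.le_floor h2) (Nat.le_succ _)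
    have hbu : ‖(C Δt)^[n] u‖ ≤ B₂ := hB₂ n hnN _ (hKSmem Δt hΔtmem u hu n)
    have hbv : ‖(C Δt)^[n] v‖ ≤ B₂ := hB₂ n hnN _ (hKSmem Δt hΔtmem v hv n)
    calc ‖(C Δt)^[n] v - (C Δt)^[n] u‖
        ≤ ‖(C Δt)^[n] v‖ + ‖(C Δt)^[n] u‖ := norm_sub_le _ _
      _ ≤ B₂ + B₂ := by gcongr
      _ ≤ 2 * B₁ + 2 + 2 * B₂ := by linarith
      _ ≤ _ := hLρ
end

section
/- Theorem 4.1 (Nonlinear Equivalence, instantiated with condition (4.3)): Given a well posed nonlinear semigroup E on a real normed vector space X and a numerical method C that is consistent with E and satisfies condition (4.3), the numerical method is convergent to the nonlinear semigroup if and only if it is stable. -/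
open Set

variable (X : Type*) [NormedAddCommGroup X] [NormedSpace ℝ X]

/-! Condition (4.3) with `ρ = ‖v - u‖` is stability itself, so only stability ⇒ convergence
needs an argument, and it is the Lax one. Writing `w k = E (k Δt) u`, the global error
`E (n Δt) u - C^n u` telescopes into the `n` defects `C^m (E Δt (w k)) - C^m (C Δt (w k))`;
consistency with tolerance `ε / (L T)` makes each one-step error at most `ε Δt / (L T)`,
stability lets `C^m` enlarge it at most `L` times, and the `n ≤ T / Δt` defects sum to at
most `ε`. Uniform continuity of `E` on a compact piece of `Z'` passes from the grid time `n Δt`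
to `t`. Consistency is needed at every intermediate time `k Δt`, so `Z'` is first replaced by
its closure downwards in time, truncated at `T + 1`: it is again regular and contains all the
points `(k Δt, u)`. -/

theorem norm_sub_iterate_le_of_forall_step_le {Y : Type*} [SeminormedAddCommGroup Y]
    (Φ : Y → Y) (w : ℕ → Y) (n : ℕ) (η : ℝ)
    (hstep : ∀ k m : ℕ, k + 1 + m = n → ‖Φ^[m] (w (k + 1)) - Φ^[m] (Φ (w k))‖ ≤ η) :
    ‖w n - Φ^[n] (w 0)‖ ≤ n * η := by
  have hdist : ∀ k ∈ Finset.range n,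
      dist (Φ^[n - k] (w k)) (Φ^[n - (k + 1)] (w (k + 1))) ≤ η := by
    intro k hk
    obtain ⟨m, rfl⟩ := Nat.exists_eq_add_of_lt (Finset.mem_range.1 hk)
    rw [dist_comm, dist_eq_norm, show k + m + 1 - k = m + 1 by omega,
      show k + m + 1 - (k + 1) = m by omega, Function.iterate_succ_apply]
    exact hstep k m (by omega)
  calc ‖w n - Φ^[n] (w 0)‖ = dist (Φ^[n - 0] (w 0)) (Φ^[n - n] (w n)) := by
        rw [dist_comm, dist_eq_norm, Nat.sub_zero, Nat.sub_self, Function.iterate_zero_apply]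
    _ ≤ ∑ k ∈ Finset.range n, dist (Φ^[n - k] (w k)) (Φ^[n - (k + 1)] (w (k + 1))) :=
        dist_le_range_sum_dist (fun k => Φ^[n - k] (w k)) n
    _ ≤ n * η := by simpa using Finset.sum_le_sum hdist

section

variable {α : Type*}

theorem IsNonlinearSemigroup.domain_antitone {Xt : ℝ → Set α} {E : ℝ → α → α}
    (hE : IsNonlinearSemigroup α Xt E) {a b : ℝ} (ha : 0 ≤ a) (hab : a ≤ b) :
    Xt b ⊆ Xt a := by
  simpa using hE.nested a (b - a) ha (sub_nonneg.2 hab)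

def truncDownClosure (Z : Set (ℝ × α)) (T : ℝ) : Set (ℝ × α) :=
  {p | 0 ≤ p.1 ∧ ∃ r, p.1 ≤ r ∧ r ≤ T ∧ (r, p.2) ∈ Z}

theorem mem_truncDownClosure_of_le {Z : Set (ℝ × α)} {T s r : ℝ} {x : α} (hr : (r, x) ∈ Z)
    (hs : 0 ≤ s) (hsr : s ≤ r) (hrT : r ≤ T) : (s, x) ∈ truncDownClosure Z T :=
  ⟨hs, r, hsr, hrT, hr⟩

theorem truncDownClosure_mono_time {Z : Set (ℝ × α)} {T s : ℝ} {p : ℝ × α}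
    (hp : p ∈ truncDownClosure Z T) (hs : 0 ≤ s) (hsp : s ≤ p.1) :
    (s, p.2) ∈ truncDownClosure Z T :=
  let ⟨_, r, hpr, hrT, hr⟩ := hp
  ⟨hs, r, hsp.trans hpr, hrT, hr⟩

theorem isClosed_truncDownClosure [TopologicalSpace α] {Z : Set (ℝ × α)} (hZ : IsClosed Z)
    (T : ℝ) : IsClosed (truncDownClosure Z T) := by
  -- the projection along the compact factor `Icc 0 T` of a closed set
  let A : Set ((ℝ × α) × Icc 0 T) :=
    {q | 0 ≤ q.1.1} ∩ ({q | q.1.1 ≤ q.2} ∩ (fun q => ((q.2 : ℝ), q.1.2)) ⁻¹' Z)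
  have hA : IsClosed A :=
    (isClosed_le continuous_const (by fun_prop)).inter
      ((isClosed_le (by fun_prop) (by fun_prop)).inter (hZ.preimage (by fun_prop)))
  convert isClosedMap_fst_of_compactSpace A hA using 1
  ext p
  constructor
  · rintro ⟨hp0, r, hpr, hrT, hr⟩
    exact ⟨(p, ⟨r, hp0.trans hpr, hrT⟩), ⟨hp0, hpr, hr⟩, rfl⟩
  · rintro ⟨⟨p, r, hr0, hrT⟩, ⟨hp0, hpr, hr⟩, rfl⟩
    exact ⟨hp0, r, hpr, hrT, hr⟩

end

section

variable {V : Type*} [NormedAddCommGroup V] {Xt : ℝ → Set V} {E C : ℝ → V → V}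

theorem stable_of_condition43 (h43 : Condition43 V Xt E C) : Stable V Xt E C := by
  intro Z hZ T hT K hK
  obtain ⟨M, hM, hMbound⟩ := h43 Z hZ T hT K hK
  refine ⟨M, hM, fun Δt n u v hΔt hnT hu hv hnu hnv => ?_⟩
  rcases eq_or_ne v u with rfl | hvu
  · simp
  · exact hMbound _ (norm_pos_iff.2 (sub_ne_zero.2 hvu)) Δt n u v hΔt hnT hu hv hnu hnv
      le_rfl

theorem RegularSet.truncDownClosure {Z : Set (ℝ × V)}
    (hZ : RegularSet V Xt E C Z) (hE : IsNonlinearSemigroup V Xt E) (T : ℝ) :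
    RegularSet V Xt E C (truncDownClosure Z T) := by
  obtain ⟨hZsub, hZclosed, hZE, hZC⟩ := hZ
  refine ⟨?_, isClosed_truncDownClosure hZclosed T, ?_, ?_⟩
  · rintro p ⟨hp0, r, hpr, -, hr⟩
    exact ⟨hp0, hE.domain_antitone hp0 hpr (hZsub hr).2⟩
  · rintro t s ht hs x ⟨-, r, hr, hrT, hrx⟩
    refine mem_truncDownClosure_of_le (hZE t (r - t) ht (by linarith) x ?_) hs
      (by linarith) (by linarith)
    rwa [add_sub_cancel]
  · rintro t Δt ht hΔt x ⟨-, r, hr, hrT, hrx⟩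
    refine mem_truncDownClosure_of_le (hZC (r - Δt) Δt (by linarith) hΔt x ?_) ht
      (by linarith) (by linarith)
    rwa [sub_add_cancel]

theorem RegularSet.step_mem {Z : Set (ℝ × V)} (hZ : RegularSet V Xt E C Z) {a Δt b : ℝ}
    (ha : 0 ≤ a) (hΔt : 0 ≤ Δt) (hb : 0 ≤ b) {u : V} (hu : (a + Δt + b, u) ∈ Z) :
    (b, E Δt (E a u)) ∈ Z ∧ (b, C Δt (E a u)) ∈ Z := by
  have hEu : (Δt + b, E a u) ∈ Z :=
    hZ.2.2.1 a _ ha (by positivity) u (by rwa [← add_assoc])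
  exact ⟨hZ.2.2.1 Δt b hΔt hb _ hEu, hZ.2.2.2 b Δt hb hΔt _ (by rwa [add_comm])⟩

theorem exists_isCompact_orbit_step_mem (hWP : WellPosed V Xt E) (hC : IsNumericalMethod V C)
    {Z : Set (ℝ × V)} (hZsub : Z ⊆ ZSet V Xt) (hZ : IsClosed Z) (T : ℝ) {K : Set V}
    (hK : IsCompact K) :
    ∃ K₂, IsCompact K₂ ∧ ∀ p ∈ Z ∩ Icc 0 T ×ˢ K, ∀ Δt ∈ Icc (0 : ℝ) 1,
      E p.1 p.2 ∈ K₂ ∧ C Δt (E p.1 p.2) ∈ K₂ := by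
  set K₁ := (fun p : ℝ × V => E p.1 p.2) '' (Z ∩ Icc 0 T ×ˢ K)
  have hK₁ : IsCompact K₁ := ((isCompact_Icc.prod hK).inter_left hZ).image_of_continuousOn
    (hWP.mono fun p hp => hZsub hp.1)
  refine ⟨(fun q : ℝ × V => C q.1 q.2) '' (Icc 0 1 ×ˢ K₁),
    (isCompact_Icc.prod hK₁).image_of_continuousOn (hC.cont.mono fun q hq => hq.1.1),
    fun p hp Δt hΔt => ⟨⟨(0, _), ⟨⟨le_rfl, zero_le_one⟩, p, hp, rfl⟩, hC.id_zero _⟩,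
      ⟨(Δt, _), ⟨hΔt, p, hp, rfl⟩, rfl⟩⟩⟩

theorem exists_norm_sub_iterate_le (hE : IsNonlinearSemigroup V Xt E) (hWP : WellPosed V Xt E)
    (hC : IsNumericalMethod V C) (hcons : Consistent V Xt E C) (hstab : Stable V Xt E C)
    {Z : Set (ℝ × V)} (hZ : RegularSet V Xt E C Z)
    (hdown : ∀ p ∈ Z, ∀ s, 0 ≤ s → s ≤ p.1 → (s, p.2) ∈ Z)
    {T : ℝ} (hT : 0 < T) {K : Set V} (hK : IsCompact K) {ε : ℝ} (hε : 0 < ε) :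
    ∃ δ > 0, ∀ (Δt : ℝ) (n : ℕ) (u : V), 0 < Δt → Δt ≤ δ → n * Δt ≤ T → u ∈ K →
      ((n : ℝ) * Δt, u) ∈ Z → ‖E (n * Δt) u - (C Δt)^[n] u‖ ≤ ε := by
  obtain ⟨K₂, hK₂, hK₂mem⟩ := exists_isCompact_orbit_step_mem hWP hC hZ.1 hZ.2.1 T hK
  obtain ⟨L, hL, hstabL⟩ := hstab Z hZ T hT K₂ hK₂
  obtain ⟨δ, hδ, hconsδ⟩ := hcons Z hZ T hT K hK (ε / (L * T)) (by positivity)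
  refine ⟨min δ 1, lt_min hδ one_pos, fun Δt n u hΔt hΔδ hnT hu hnu => ?_⟩
  have hgrid : ∀ j : ℕ, j ≤ n → ((j : ℝ) * Δt, u) ∈ Z ∩ Icc 0 T ×ˢ K := fun j hj => by
    have hjn : (j : ℝ) * Δt ≤ n * Δt := by gcongr
    exact ⟨hdown _ hnu _ (by positivity) hjn, ⟨by positivity, hjn.trans hnT⟩, hu⟩
  have hstep : ∀ k m : ℕ, k + 1 + m = n →
      ‖(C Δt)^[m] (E ((k + 1 : ℕ) * Δt) u) - (C Δt)^[m] (C Δt (E (k * Δt) u))‖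
        ≤ L * (ε / (L * T) * Δt) := by
    intro k m hkm
    set w := E (k * Δt) u
    have hk : ((k + 1 : ℕ) * Δt, u) ∈ Z ∩ Icc 0 T ×ˢ K := hgrid (k + 1) (by omega)
    have hsucc : E ((k + 1 : ℕ) * Δt) u = E Δt w := by
      have hk' := (hZ.1 hk.1).2
      push_cast [add_mul, one_mul] at hk' ⊢
      exact hE.comp _ _ (by positivity) hΔt.le u hk'
    obtain ⟨hEwZ, hCwZ⟩ := hZ.step_mem (a := k * Δt) (b := m * Δt) (by positivity) hΔt.le
      (by positivity) (u := u) (by convert hnu using 2; rw [← hkm]; push_cast; ring)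
    have hΔt₁ : Δt ∈ Icc (0 : ℝ) 1 := ⟨hΔt.le, hΔδ.trans (min_le_right _ _)⟩
    have hEw : E Δt w ∈ K₂ := hsucc ▸ (hK₂mem _ hk _ hΔt₁).1
    have hCw : C Δt w ∈ K₂ := (hK₂mem _ (hgrid k (by omega)) _ hΔt₁).2
    have hdefect : ‖E Δt w - C Δt w‖ ≤ ε / (L * T) * Δt := by
      rw [norm_sub_rev]
      refine hconsδ _ _ u (hgrid k (by omega)).2.1 hΔt (hΔδ.trans (min_le_left _ _)) hu ?_
      simpa [add_mul] using hk.1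
    have hmT : (m : ℝ) * Δt ≤ T :=
      le_trans (by gcongr; exact_mod_cast (by omega : m ≤ n)) hnT
    rw [hsucc]
    calc _ ≤ L * ‖E Δt w - C Δt w‖ :=
          hstabL Δt m (C Δt w) (E Δt w) hΔt hmT hCw hEw hCwZ hEwZ
      _ ≤ L * (ε / (L * T) * Δt) := by gcongr
  have hu₀ : u ∈ Xt 0 := (hZ.1 (hdown _ hnu 0 le_rfl (by positivity))).2
  calc ‖E (n * Δt) u - (C Δt)^[n] u‖
      = ‖E ((n : ℕ) * Δt) u - (C Δt)^[n] (E ((0 : ℕ) * Δt) u)‖ := by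
        rw [Nat.cast_zero, zero_mul, hE.id_zero u hu₀]
    _ ≤ n * (L * (ε / (L * T) * Δt)) :=
        norm_sub_iterate_le_of_forall_step_le (C Δt) (fun j => E (j * Δt) u) n _ hstep
    _ = ε / T * (n * Δt) := by field_simp
    _ ≤ ε / T * T := by gcongr
    _ = ε := by field_simp

theorem convergent_of_stable (hE : IsNonlinearSemigroup V Xt E) (hWP : WellPosed V Xt E)
    (hC : IsNumericalMethod V C) (hcons : Consistent V Xt E C) (hstab : Stable V Xt E C) :
    Convergent V Xt E C := by
  intro Z hZ T hT K hK ε hε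
  set Z₁ := truncDownClosure Z (T + 1)
  have hZ₁ : RegularSet V Xt E C Z₁ := hZ.truncDownClosure hE (T + 1)
  obtain ⟨δ, hδ, hdisc⟩ := exists_norm_sub_iterate_le hE hWP hC hcons hstab hZ₁
    (fun _ hp _ hs hsp => truncDownClosure_mono_time hp hs hsp) (T := T + 1) (by linarith) hK
    (half_pos hε)
  have hS : IsCompact (Z₁ ∩ Icc 0 (T + 1) ×ˢ K) := (isCompact_Icc.prod hK).inter_left hZ₁.2.1
  obtain ⟨θ, hθ, hunif⟩ := Metric.uniformContinuousOn_iff_le.1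
    (hS.uniformContinuousOn_of_continuous (hWP.mono fun p hp => hZ₁.1 hp.1)) (ε / 2)
    (half_pos hε)
  refine ⟨min δ (min θ 1), by positivity, fun t Δt n u ht hΔt hu htu hnu hΔθ htn => ?_⟩
  have htn' : |t - n * Δt| ≤ θ ∧ |t - n * Δt| ≤ 1 :=
    ⟨htn.trans ((min_le_right _ _).trans (min_le_left _ _)),
      htn.trans ((min_le_right _ _).trans (min_le_right _ _))⟩
  have htT : t ≤ T + 1 := by linarith [ht.2]
  have hnT : (n : ℝ) * Δt ≤ T + 1 := by linarith [(abs_le.1 htn'.2).1, ht.2]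
  have htu₁ : (t, u) ∈ Z₁ ∩ Icc 0 (T + 1) ×ˢ K :=
    ⟨mem_truncDownClosure_of_le htu ht.1 le_rfl htT, ⟨ht.1, htT⟩, hu⟩
  have hnu₁ : ((n : ℝ) * Δt, u) ∈ Z₁ ∩ Icc 0 (T + 1) ×ˢ K :=
    ⟨mem_truncDownClosure_of_le hnu (by positivity) le_rfl hnT, ⟨by positivity, hnT⟩, hu⟩
  calc ‖E t u - (C Δt)^[n] u‖ ≤ ‖E t u - E (n * Δt) u‖ + ‖E (n * Δt) u - (C Δt)^[n] u‖ :=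
        norm_sub_le_norm_sub_add_norm_sub _ _ _
    _ ≤ ε / 2 + ε / 2 := by
        refine add_le_add ?_
          (hdisc Δt n u hΔt (hΔθ.trans (min_le_left _ _)) hnT hu hnu₁.1)
        rw [← dist_eq_norm]
        exact hunif _ htu₁ _ hnu₁ (by rw [dist_prod_same_right, Real.dist_eq]; exact htn'.1)
    _ = ε := add_halves ε

end

/-- Theorem 4.1 (Nonlinear Equivalence, instantiated with condition (4.3)). -/
theorem convergent_iff_stable
    (Xt : ℝ → Set X) (E C : ℝ → X → X)
    (hE : IsNonlinearSemigroup X Xt E) (hWP : WellPosed X Xt E)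
    (hC : IsNumericalMethod X C)
    (hcons : Consistent X Xt E C) (h43 : Condition43 X Xt E C) :
    Convergent X Xt E C ↔ Stable X Xt E C :=
  ⟨fun _ => stable_of_condition43 h43, convergent_of_stable hE hWP hC hcons⟩
end

section
/- (Stability ⟹ Convergence, Section 4): Given a well posed nonlinear semigroup E on a real normed vector space X and a numerical method C that is consistent with E and stable, the numerical method is convergent to the nonlinear semigroup. -/
open Set

variable (X : Type*) [NormedAddCommGroup X] [NormedSpace ℝ X]

/-!
The global error `E(nΔt)u - C_Δt^n u` telescopes into the `n` local errors
`C_Δt(E(kΔt)u) - E(Δt)(E(kΔt)u)`, each at most `εΔt` by consistency and each amplified by at most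
the stability constant `L` over the remaining steps, so it is at most `L ε nΔt`. Both constants are
taken on compact sets: the values `E(s)u` for `s ∈ [0,T]`, `u ∈ K` are compact by well-posedness,
and so are their images under one step `C_τ`, `τ ≤ 1`, by continuity of `C`.
The regular set is first enlarged so that it is closed under going back in time by at most `T`,
which keeps all intermediate grid points admissible. Off the grid, uniform continuity of
`(t,u) ↦ E(t)u` on compacts bridges the gap between `t` and `nΔt`.
-/

namespace NonlinearSemigroup

def lowerHull {α : Type*} (T : ℝ) (Z : Set (ℝ × α)) : Set (ℝ × α) :=
  {p | 0 ≤ p.1 ∧ ∃ r ∈ Icc 0 T, (p.1 + r, p.2) ∈ Z}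

theorem mem_lowerHull_of_le {α : Type*} {T s t : ℝ} {Z : Set (ℝ × α)} {u : α}
    (hs : 0 ≤ s) (hst : s ≤ t) (hts : t - s ≤ T) (hu : (t, u) ∈ Z) :
    (s, u) ∈ lowerHull T Z :=
  ⟨hs, t - s, ⟨sub_nonneg.mpr hst, hts⟩, by simpa using hu⟩

theorem isClosed_lowerHull {α : Type*} [TopologicalSpace α] {Z : Set (ℝ × α)} (hZ : IsClosed Z)
    (T : ℝ) : IsClosed (lowerHull T Z) := by
  have hfst : lowerHull T Z =
      {p | 0 ≤ p.1} ∩ Prod.fst '' {q : (ℝ × α) × Icc (0 : ℝ) T | (q.1.1 + q.2, q.1.2) ∈ Z} := by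
    ext p
    simp [lowerHull]
  rw [hfst]
  exact (isClosed_le continuous_const continuous_fst).inter
    (isClosedMap_fst_of_compactSpace _ (hZ.preimage (by fun_prop)))

variable {Y : Type*} [NormedAddCommGroup Y] {Xt : ℝ → Set Y} {E C : ℝ → Y → Y}

theorem regularSet_lowerHull (hE : IsNonlinearSemigroup Y Xt E) {Z : Set (ℝ × Y)}
    (hZ : RegularSet Y Xt E C Z) (T : ℝ) : RegularSet Y Xt E C (lowerHull T Z) := by
  obtain ⟨hZsub, hZc, hZE, hZC⟩ := hZ
  refine ⟨?_, isClosed_lowerHull hZc T, ?_, ?_⟩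
  · rintro ⟨s, u⟩ ⟨hs, r, hr, hu⟩
    exact ⟨hs, hE.nested s r hs hr.1 (hZsub hu).2⟩
  · rintro t s ht hs u ⟨-, r, hr, hu⟩
    refine ⟨hs, r, hr, hZE t (s + r) ht (add_nonneg hs hr.1) u ?_⟩
    simpa only [add_assoc] using hu
  · rintro t Δt ht hΔt u ⟨-, r, hr, hu⟩
    refine ⟨ht, r, hr, hZC (t + r) Δt (add_nonneg ht hr.1) hΔt u ?_⟩
    simpa only [add_right_comm] using hu

theorem isCompact_image_semigroup (hWP : WellPosed Y Xt E) {Z : Set (ℝ × Y)}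
    (hZ : Z ⊆ ZSet Y Xt) (hZc : IsClosed Z) (T : ℝ) {K : Set Y} (hK : IsCompact K) :
    IsCompact ((fun p : ℝ × Y => E p.1 p.2) '' (Icc 0 T ×ˢ K ∩ Z)) :=
  ((isCompact_Icc.prod hK).inter_right hZc).image_of_continuousOn
    (hWP.mono (inter_subset_right.trans hZ))

theorem isCompact_image_method (hC : IsNumericalMethod Y C) (τ : ℝ) {K : Set Y}
    (hK : IsCompact K) : IsCompact ((fun p : ℝ × Y => C p.1 p.2) '' (Icc 0 τ ×ˢ K)) :=
  (isCompact_Icc.prod hK).image_of_continuousOn (hC.cont.mono fun _ hp => hp.1.1)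

theorem exists_norm_semigroup_sub_le_of_abs_sub_le (hWP : WellPosed Y Xt E) {Z : Set (ℝ × Y)}
    (hZ : Z ⊆ ZSet Y Xt) (hZc : IsClosed Z) (T : ℝ) {K : Set Y} (hK : IsCompact K)
    {ε : ℝ} (hε : 0 < ε) :
    ∃ θ > 0, ∀ t s : ℝ, ∀ u : Y, t ∈ Icc 0 T → s ∈ Icc 0 T → u ∈ K → (t, u) ∈ Z → (s, u) ∈ Z →
      |t - s| ≤ θ → ‖E t u - E s u‖ ≤ ε := by
  have hQ : IsCompact (Icc 0 T ×ˢ K ∩ Z) := (isCompact_Icc.prod hK).inter_right hZc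
  obtain ⟨θ, hθ, hUC⟩ := Metric.uniformContinuousOn_iff_le.mp
    (hQ.uniformContinuousOn_of_continuous (hWP.mono (inter_subset_right.trans hZ))) ε hε
  refine ⟨θ, hθ, fun t s u ht hs hu htu hsu hts => ?_⟩
  have hdist : dist (t, u) (s, u) ≤ θ := by
    simpa [Prod.dist_eq, Real.dist_eq] using hts
  simpa [dist_eq_norm] using hUC (t, u) ⟨⟨ht, hu⟩, htu⟩ (s, u) ⟨⟨hs, hu⟩, hsu⟩ hdist

/-- Lady Windermere's fan: the global error is at most the sum of the propagated local errors. -/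
theorem dist_iterate_le_of_forall_dist_le {α : Type*} [PseudoMetricSpace α] (f : α → α)
    (y : ℕ → α) (n : ℕ) {η : ℝ}
    (h : ∀ k < n, dist (f^[n - k] (y k)) (f^[n - (k + 1)] (y (k + 1))) ≤ η) :
    dist (f^[n] (y 0)) (y n) ≤ n * η := by
  calc dist (f^[n] (y 0)) (y n)
      ≤ ∑ k ∈ Finset.range n, dist (f^[n - k] (y k)) (f^[n - (k + 1)] (y (k + 1))) := by
        simpa using dist_le_range_sum_dist (fun k => f^[n - k] (y k)) n
    _ ≤ n * η := by
        simpa using Finset.sum_le_card_nsmul _ _ η fun k hk => h k (Finset.mem_range.mp hk)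

theorem dist_iterate_semigroup_step_le (hE : IsNonlinearSemigroup Y Xt E) {Z : Set (ℝ × Y)}
    (hZ : RegularSet Y Xt E C Z) {K : Set Y} {T L η Δt s : ℝ} {m : ℕ} {u : Y}
    (hL : 0 ≤ L) (hstab : ∀ (Δt : ℝ) (n : ℕ) (u v : Y), 0 < Δt → (n : ℝ) * Δt ≤ T →
      u ∈ K → v ∈ K → ((n : ℝ) * Δt, u) ∈ Z → ((n : ℝ) * Δt, v) ∈ Z →
      ‖(C Δt)^[n] v - (C Δt)^[n] u‖ ≤ L * ‖v - u‖)
    (hs : 0 ≤ s) (hΔt : 0 < Δt) (hmT : (m : ℝ) * Δt ≤ T) (hu : (s + Δt + m * Δt, u) ∈ Z)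
    (hCK : C Δt (E s u) ∈ K) (hEK : E (s + Δt) u ∈ K)
    (hloc : ‖C Δt (E s u) - E Δt (E s u)‖ ≤ η) :
    dist ((C Δt)^[m + 1] (E s u)) ((C Δt)^[m] (E (s + Δt) u)) ≤ L * η := by
  obtain ⟨hZsub, -, hZE, hZC⟩ := hZ
  have hmΔt : 0 ≤ (m : ℝ) * Δt := by positivity
  have hsemi : E (s + Δt) u = E Δt (E s u) :=
    hE.comp s Δt hs hΔt.le u (hE.nested _ _ (by positivity) hmΔt (hZsub hu).2)
  have hCZ : ((m : ℝ) * Δt, C Δt (E s u)) ∈ Z :=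
    hZC _ Δt hmΔt hΔt.le _ (hZE s _ hs (by positivity) u (by rwa [add_comm _ Δt, ← add_assoc]))
  have hEZ : ((m : ℝ) * Δt, E (s + Δt) u) ∈ Z := hZE _ _ (by positivity) hmΔt u hu
  rw [Function.iterate_succ_apply, dist_eq_norm]
  calc _ ≤ L * ‖C Δt (E s u) - E (s + Δt) u‖ := hstab Δt m _ _ hΔt hmT hEK hCK hEZ hCZ
    _ ≤ L * η := by rw [hsemi]; exact mul_le_mul_of_nonneg_left hloc hL

theorem exists_norm_semigroup_sub_iterate_le (hE : IsNonlinearSemigroup Y Xt E)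
    (hWP : WellPosed Y Xt E) (hC : IsNumericalMethod Y C) (hcons : Consistent Y Xt E C)
    (hstab : Stable Y Xt E C) {Z : Set (ℝ × Y)} (hZ : RegularSet Y Xt E C Z) {T : ℝ}
    (hT : 0 < T) {K : Set Y} (hK : IsCompact K) {ε : ℝ} (hε : 0 < ε) :
    ∃ θ > 0, ∀ (Δt : ℝ) (n : ℕ) (u : Y), 0 < Δt → Δt ≤ θ → (n : ℝ) * Δt ≤ T → u ∈ K →
      ((n : ℝ) * Δt, u) ∈ Z → ‖E (n * Δt) u - (C Δt)^[n] u‖ ≤ ε := by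
  set Z' := lowerHull T Z
  have hZ' : RegularSet Y Xt E C Z' := regularSet_lowerHull hE hZ T
  set K₂ := (fun p : ℝ × Y => E p.1 p.2) '' (Icc 0 T ×ˢ K ∩ Z')
  set K₃ := (fun p : ℝ × Y => C p.1 p.2) '' (Icc 0 1 ×ˢ K₂) ∪ K₂
  have hK₂ : IsCompact K₂ := isCompact_image_semigroup hWP hZ'.1 hZ'.2.1 T hK
  obtain ⟨L, hL, hLstab⟩ := hstab Z' hZ' T hT K₃ ((isCompact_image_method hC 1 hK₂).union hK₂)
  obtain ⟨δ, hδ, hδcons⟩ := hcons Z' hZ' T hT K hK (ε / (L * T)) (by positivity)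
  refine ⟨min δ 1, by positivity, fun Δt n u hΔt hΔtθ hnT hu hnu => ?_⟩
  have hkT : ∀ k ≤ n, (k : ℝ) * Δt ≤ T := fun k hk =>
    (mul_le_mul_of_nonneg_right (by exact_mod_cast hk) hΔt.le).trans hnT
  have hmem : ∀ k ≤ n, ((k : ℝ) * Δt, u) ∈ Z' := fun k hk =>
    mem_lowerHull_of_le (by positivity) (by gcongr) (by nlinarith [hkT k hk]) hnu
  have hK₂mem : ∀ k ≤ n, E (k * Δt) u ∈ K₂ := fun k hk =>
    ⟨_, ⟨⟨⟨by positivity, hkT k hk⟩, hu⟩, hmem k hk⟩, rfl⟩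
  have hstep : ∀ k < n, dist ((C Δt)^[n - k] (E (k * Δt) u))
      ((C Δt)^[n - (k + 1)] (E ((k + 1 : ℕ) * Δt) u)) ≤ L * (ε / (L * T) * Δt) := by
    intro k hk
    have hsucc : ((k + 1 : ℕ) : ℝ) * Δt = k * Δt + Δt := by push_cast; ring
    have hend : (k : ℝ) * Δt + Δt + ((n - (k + 1) : ℕ) : ℝ) * Δt = n * Δt := by
      rw [Nat.cast_sub hk]; push_cast; ring
    rw [show n - k = n - (k + 1) + 1 by omega, hsucc]
    refine dist_iterate_semigroup_step_le hE hZ' hL.le hLstab (by positivity) hΔt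
      (hkT _ (Nat.sub_le n (k + 1))) (hend ▸ hmem n le_rfl)
      (Or.inl ⟨(Δt, _), ⟨⟨hΔt.le, hΔtθ.trans (min_le_right _ _)⟩, hK₂mem k hk.le⟩, rfl⟩)
      (Or.inr (hsucc ▸ hK₂mem (k + 1) hk))
      (hδcons _ Δt u ⟨by positivity, hkT k hk.le⟩ hΔt (hΔtθ.trans (min_le_left _ _)) hu
        (hsucc ▸ hmem (k + 1) hk))
  have hinit : E ((0 : ℕ) * Δt) u = u := by
    simpa using hE.id_zero u (hZ'.1 (by simpa using hmem 0 n.zero_le)).2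
  rw [norm_sub_rev, ← dist_eq_norm]
  calc dist ((C Δt)^[n] u) (E (n * Δt) u)
      ≤ n * (L * (ε / (L * T) * Δt)) := by
        simpa only [hinit] using
          dist_iterate_le_of_forall_dist_le (C Δt) (fun k => E (k * Δt) u) n hstep
    _ = ε * (n * Δt / T) := by field_simp
    _ ≤ ε := mul_le_of_le_one_right hε.le ((div_le_one hT).mpr hnT)

end NonlinearSemigroup

/-- Stability ⟹ Convergence (Section 4). -/
theorem stable_consistent_implies_convergent
    (Xt : ℝ → Set X) (E C : ℝ → X → X)
    (hE : IsNonlinearSemigroup X Xt E) (hWP : WellPosed X Xt E)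
    (hC : IsNumericalMethod X C)
    (hcons : Consistent X Xt E C) (hstab : Stable X Xt E C) :
    Convergent X Xt E C := by
  intro Z hZ T hT K hK ε hε
  obtain ⟨θ₁, hθ₁, htime⟩ :=
    NonlinearSemigroup.exists_norm_semigroup_sub_le_of_abs_sub_le hWP hZ.1 hZ.2.1 (T + 1) hK
      (half_pos hε)
  obtain ⟨θ₂, hθ₂, hgrid⟩ :=
    NonlinearSemigroup.exists_norm_semigroup_sub_iterate_le hE hWP hC hcons hstab hZ
      (by linarith : 0 < T + 1) hK (half_pos hε)
  refine ⟨min (min θ₁ θ₂) 1, by positivity, fun t Δt n u ht hΔt hu htu hnu hΔtθ htn => ?_⟩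
  have hθ₁' : |t - n * Δt| ≤ θ₁ := htn.trans ((min_le_left _ _).trans (min_le_left _ _))
  have hnT : (n : ℝ) * Δt ≤ T + 1 := by
    linarith [(abs_le.mp (htn.trans (min_le_right _ _))).1, ht.2]
  calc ‖E t u - (C Δt)^[n] u‖
      ≤ ‖E t u - E (n * Δt) u‖ + ‖E (n * Δt) u - (C Δt)^[n] u‖ :=
        norm_sub_le_norm_sub_add_norm_sub _ _ _
    _ ≤ ε / 2 + ε / 2 := add_le_add
        (htime t _ u ⟨ht.1, by linarith [ht.2]⟩ ⟨by positivity, hnT⟩ hu htu hnu hθ₁')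
        (hgrid Δt n u hΔt (hΔtθ.trans ((min_le_left _ _).trans (min_le_right _ _))) hnT hu hnu)
    _ = ε := add_halves ε
end

section
/- (Claim (3.4) in the proof of Theorem 3.1): Given a well posed nonlinear semigroup E on a real normed vector space X, a numerical method C convergent to it, a regular subset Z' ⊆ Z, T ∈ (0,∞) and a compact set K ⊆ X, the set H = { C^n_{Δt} u : Δt ∈ [0,T], n ∈ ℕ, nΔt ≤ T, u ∈ K ∩ X'_{nΔt} } is totally bounded (precompact) in X; in particular H is bounded. -/
open Set

variable (X : Type*) [NormedAddCommGroup X] [NormedSpace ℝ X]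

/-! Let `θ` be the step size that convergence provides for accuracy `ε`. An iterate
`C_{Δt}^n u` with `Δt ≤ θ` is `ε`-close to `E(nΔt) u`, and these values form a compact
set by well posedness. If `Δt > θ`, then `n ≤ T/θ`, so only finitely many `n` occur,
and each `(Δt, u) ↦ C_{Δt}^n u` maps the compact set `[0,T] × K` onto a compact set.
A set that lies within `ε` of a compact set for every `ε > 0` is totally bounded. -/

theorem totallyBounded_of_forall_exists_isCompact_dist_le {Y : Type*} [PseudoMetricSpace Y]
    {A : Set Y} (h : ∀ ε > 0, ∃ S : Set Y, IsCompact S ∧ ∀ x ∈ A, ∃ y ∈ S, dist x y ≤ ε) :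
    TotallyBounded A := by
  refine Metric.totallyBounded_iff.mpr fun ε hε => ?_
  obtain ⟨S, hS, hAS⟩ := h (ε / 2) (half_pos hε)
  obtain ⟨t, ht, hSt⟩ := Metric.totallyBounded_iff.mp hS.totallyBounded (ε / 2) (half_pos hε)
  refine ⟨t, ht, fun x hx => ?_⟩
  obtain ⟨y, hyS, hxy⟩ := hAS x hx
  obtain ⟨c, hct, hyc⟩ := mem_iUnion₂.mp (hSt hyS)
  refine mem_iUnion₂.mpr ⟨c, hct, Metric.mem_ball.mpr ?_⟩
  calc dist x c ≤ dist x y + dist y c := dist_triangle x y c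
    _ < ε / 2 + ε / 2 := add_lt_add_of_le_of_lt hxy (Metric.mem_ball.mp hyc)
    _ = ε := add_halves ε

theorem ContinuousOn.iterate_uncurry {α Y : Type*} [TopologicalSpace α] [TopologicalSpace Y]
    {f : α → Y → Y} {s : Set α} (hf : ContinuousOn (fun p : α × Y => f p.1 p.2) (Prod.fst ⁻¹' s))
    (n : ℕ) : ContinuousOn (fun p : α × Y => (f p.1)^[n] p.2) (Prod.fst ⁻¹' s) := by
  induction n with
  | zero => exact continuousOn_snd
  | succ n ih =>
    simp only [Function.iterate_succ_apply']
    exact hf.comp (continuousOn_fst.prodMk ih) fun _ hp => hp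

theorem nat_le_ceil_div_of_mul_le {n : ℕ} {θ Δt T : ℝ} (hθ : 0 < θ) (hθΔt : θ < Δt)
    (hnT : n * Δt ≤ T) : n ≤ ⌈T / θ⌉₊ := by
  have hnθ : (n : ℝ) ≤ T / θ := by
    rw [le_div_iff₀ hθ]
    calc (n : ℝ) * θ ≤ n * Δt := by gcongr
      _ ≤ T := hnT
  exact_mod_cast hnθ.trans (Nat.le_ceil _)

section

variable {V : Type*} [NormedAddCommGroup V] {Xt : ℝ → Set V} {E C : ℝ → V → V}
  {Z' : Set (ℝ × V)} {T : ℝ} {K : Set V}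

def numericalOrbitSet (C : ℝ → V → V) (Z' : Set (ℝ × V)) (T : ℝ) (K : Set V) : Set V :=
  {x : V | ∃ (Δt : ℝ) (n : ℕ) (u : V),
    Δt ∈ Icc (0 : ℝ) T ∧ (n : ℝ) * Δt ≤ T ∧ u ∈ K ∧ ((n : ℝ) * Δt, u) ∈ Z' ∧ x = (C Δt)^[n] u}

theorem IsNumericalMethod.iterate_zero_apply (hC : IsNumericalMethod V C) (n : ℕ) (u : V) :
    (C 0)^[n] u = u :=
  Function.iterate_fixed (hC.id_zero u) n

theorem WellPosed.isCompact_image (hWP : WellPosed V Xt E) (hZ' : RegularSet V Xt E C Z')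
    (hK : IsCompact K) :
    IsCompact ((fun p : ℝ × V => E p.1 p.2) '' (Z' ∩ Icc 0 T ×ˢ K)) :=
  ((isCompact_Icc.prod hK).inter_left hZ'.2.1).image_of_continuousOn
    (hWP.mono fun _ hp => hZ'.1 hp.1)

theorem IsNumericalMethod.isCompact_biUnion_iterate_image (hC : IsNumericalMethod V C)
    (hK : IsCompact K) (N : ℕ) :
    IsCompact (⋃ n ≤ N, (fun p : ℝ × V => (C p.1)^[n] p.2) '' (Icc 0 T ×ˢ K)) :=
  (finite_Iic N).isCompact_biUnion fun n _ =>
    (isCompact_Icc.prod hK).image_of_continuousOn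
      ((hC.cont.iterate_uncurry (s := Ici 0) n).mono fun _ hp => hp.1.1)

theorem exists_isCompact_dist_iterate_le (hWP : WellPosed V Xt E) (hC : IsNumericalMethod V C)
    (hconv : Convergent V Xt E C) (hZ' : RegularSet V Xt E C Z') (hT : 0 < T)
    (hK : IsCompact K) {ε : ℝ} (hε : 0 < ε) :
    ∃ S : Set V, IsCompact S ∧ ∀ x ∈ numericalOrbitSet C Z' T K, ∃ y ∈ S, dist x y ≤ ε := by
  obtain ⟨θ, hθ, hconvθ⟩ := hconv Z' hZ' T hT K hK ε hε
  refine ⟨(fun p : ℝ × V => E p.1 p.2) '' (Z' ∩ Icc 0 T ×ˢ K) ∪ K ∪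
      ⋃ n ≤ ⌈T / θ⌉₊, (fun p : ℝ × V => (C p.1)^[n] p.2) '' (Icc 0 T ×ˢ K),
    ((hWP.isCompact_image hZ' hK).union hK).union
      (hC.isCompact_biUnion_iterate_image hK _), ?_⟩
  rintro _ ⟨Δt, n, u, hΔt, hnT, huK, huZ', rfl⟩
  rcases hΔt.1.eq_or_lt with rfl | hΔt_pos
  · exact ⟨u, .inl (.inr huK), by simpa [hC.iterate_zero_apply] using hε.le⟩
  rcases le_or_gt Δt θ with hΔtθ | hθΔt
  · have hnΔt : (n : ℝ) * Δt ∈ Icc 0 T := ⟨by positivity, hnT⟩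
    refine ⟨E (n * Δt) u, .inl (.inl ⟨(n * Δt, u), ⟨huZ', hnΔt, huK⟩, rfl⟩), ?_⟩
    rw [dist_comm, dist_eq_norm]
    exact hconvθ _ Δt n u hnΔt hΔt_pos huK huZ' huZ' hΔtθ (by simpa using hθ.le)
  · have hnN := nat_le_ceil_div_of_mul_le hθ hθΔt hnT
    exact ⟨_, .inr (mem_biUnion hnN ⟨(Δt, u), ⟨hΔt, huK⟩, rfl⟩), by simpa using hε.le⟩

end

theorem H_totallyBounded
    (Xt : ℝ → Set X) (E C : ℝ → X → X)
    (hWP : WellPosed X Xt E)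
    (hC : IsNumericalMethod X C) (hconv : Convergent X Xt E C)
    (Z' : Set (ℝ × X)) (hZ' : RegularSet X Xt E C Z')
    (T : ℝ) (hT : 0 < T) (K : Set X) (hK : IsCompact K) :
    TotallyBounded {x : X | ∃ (Δt : ℝ) (n : ℕ) (u : X),
        Δt ∈ Icc (0 : ℝ) T ∧ (n : ℝ) * Δt ≤ T ∧ u ∈ K ∧
        ((n : ℝ) * Δt, u) ∈ Z' ∧ x = (C Δt)^[n] u} ∧
    Bornology.IsBounded {x : X | ∃ (Δt : ℝ) (n : ℕ) (u : X),
        Δt ∈ Icc (0 : ℝ) T ∧ (n : ℝ) * Δt ≤ T ∧ u ∈ K ∧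
        ((n : ℝ) * Δt, u) ∈ Z' ∧ x = (C Δt)^[n] u} := by
  have hH : TotallyBounded (numericalOrbitSet C Z' T K) :=
    totallyBounded_of_forall_exists_isCompact_dist_le fun _ hε =>
      exists_isCompact_dist_iterate_le hWP hC hconv hZ' hT hK hε
  exact ⟨hH, hH.isBounded⟩
end
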